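/- Let g ≥ 1 and V = (Fin (g+1) → ZMod 2). Every element of the subgroup Iso_{α₁} = {F ∈ O(V) : F(e_0) = e_0} is a product of the following elements: (i) coordinate permutations of V induced by permutations of the indices {1, …, g} fixing index 0, and (ii) when g ≥ 4, the transvection T_u : x ↦ x + ⟨x,u⟩·u with u = e_1 + e_2 + e_3 + e_4. In other words, Iso_{α₁} is generated by these elements. -/
import Mathlib


/-- The orthogonal group of `Fin n → ZMod 2` for the standard bilinear form
`⟨x,y⟩ = ∑ i, x i * y i`, as a subgroup of the group of linear automorphisms. -/
def OrthGroup (n : ℕ) : Subgroup ((Fin n → ZMod 2) ≃ₗ[ZMod 2] (Fin n → ZMod 2)) where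
  carrier := {T | ∀ x y : Fin n → ZMod 2, ∑ i, T x i * T y i = ∑ i, x i * y i}
  one_mem' := by intro x y; rfl
  mul_mem' := by
    intro a b ha hb x y
    exact (ha (b x) (b y)).trans (hb x y)
  inv_mem' := by
    intro a ha x y
    have h := ha (a.symm x) (a.symm y)
    simp only [LinearEquiv.apply_symm_apply] at h
    exact h.symm

/-- The coordinate permutations of `Fin (g+1) → ZMod 2` induced by permutations of the
indices `{0, 1, …, g}` fixing the index `0` (i.e. permutations of `e₁, …, e_g`). -/
def PermFix0 (g : ℕ) :
    Set ((Fin (g + 1) → ZMod 2) ≃ₗ[ZMod 2] (Fin (g + 1) → ZMod 2)) :=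
  {F | ∃ π : Equiv.Perm (Fin (g + 1)), π 0 = 0 ∧ ∀ x : Fin (g + 1) → ZMod 2, F x = x ∘ π}

/-- The vector `u = e₁ + e₂ + e₃ + e₄` of `Fin (g+1) → ZMod 2`. -/
def u1234 (g : ℕ) : Fin (g + 1) → ZMod 2 :=
  Pi.single 1 1 + Pi.single 2 1 + Pi.single 3 1 + Pi.single 4 1

/-- When `g ≥ 4`, the transvection `T_u : x ↦ x + ⟨x,u⟩ • u` with `u = e₁+e₂+e₃+e₄`
(as a subset of the linear automorphisms of `Fin (g+1) → ZMod 2`). -/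
def Transvection1234 (g : ℕ) :
    Set ((Fin (g + 1) → ZMod 2) ≃ₗ[ZMod 2] (Fin (g + 1) → ZMod 2)) :=
  {F | 4 ≤ g ∧ ∀ x : Fin (g + 1) → ZMod 2,
    F x = x + (∑ i, x i * u1234 g i) • u1234 g}

/-! ### Auxiliary material for the proof -/

namespace StabAux

open Finset

lemma zmod2_add_self (a : ZMod 2) : a + a = 0 := by revert a; decide
lemma zmod2_mul_self (a : ZMod 2) : a * a = a := by revert a; decide
lemma zmod2_cases (a : ZMod 2) : a = 0 ∨ a = 1 := by revert a; decide

variable {n : ℕ}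

/-- weight of a vector -/
def wt (v : Fin n → ZMod 2) : ℕ := (Finset.univ.filter (fun i => v i = 1)).card

lemma sum_eq_wt (v : Fin n → ZMod 2) : ∑ i, v i = (wt v : ZMod 2) := by
  have h : ∀ i, v i = if v i = 1 then (1 : ZMod 2) else 0 := by
    intro i; rcases zmod2_cases (v i) with h | h <;> simp [h]
  calc ∑ i, v i = ∑ i, if v i = 1 then (1:ZMod 2) else 0 :=
        Finset.sum_congr rfl fun i _ => h i
    _ = (wt v : ZMod 2) := by rw [Finset.sum_boole]; rfl

lemma wt_odd (v : Fin n → ZMod 2) (h : ∑ i, v i = 1) : wt v % 2 = 1 := by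
  have h1 : ((wt v : ℕ) : ZMod 2) = 1 := by rw [← sum_eq_wt]; exact h
  rcases Nat.mod_two_eq_zero_or_one (wt v) with h2 | h2
  · exfalso
    have h3 : ((wt v % 2 : ℕ) : ZMod 2) = 1 := by rw [ZMod.natCast_mod]; exact h1
    rw [h2] at h3
    exact absurd h3 (by decide)
  · exact h2

lemma sum_single_mul (i : Fin n) (y : Fin n → ZMod 2) :
    ∑ t, (Pi.single i 1 : Fin n → ZMod 2) t * y t = y i := by
  simp [Pi.single_apply, ite_mul]

lemma sum_mul_single (i : Fin n) (y : Fin n → ZMod 2) :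
    ∑ t, y t * (Pi.single i 1 : Fin n → ZMod 2) t = y i := by
  simp [Pi.single_apply, mul_ite]

lemma comp_single (π : Equiv.Perm (Fin n)) (i : Fin n) :
    (Pi.single i (1 : ZMod 2)) ∘ π = Pi.single (π.symm i) 1 := by
  funext t
  simp [Function.comp, Pi.single_apply, Equiv.apply_eq_iff_eq_symm_apply]

lemma eq_sum_single (x : Fin n → ZMod 2) :
    x = ∑ i, x i • (Pi.single i 1 : Fin n → ZMod 2) := by
  funext j
  rw [Finset.sum_apply]
  simp [Pi.single_apply, smul_eq_mul, mul_ite, Finset.sum_ite_eq]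

/-- coordinate permutation as linear equivalence -/
def permL (π : Equiv.Perm (Fin n)) :
    (Fin n → ZMod 2) ≃ₗ[ZMod 2] (Fin n → ZMod 2) :=
  LinearEquiv.funCongrLeft (ZMod 2) (ZMod 2) π

@[simp] lemma permL_apply (π : Equiv.Perm (Fin n)) (x : Fin n → ZMod 2) :
    permL π x = x ∘ π := rfl

@[simp] lemma permL_inv_apply (π : Equiv.Perm (Fin n)) (x : Fin n → ZMod 2) :
    (permL π)⁻¹ x = x ∘ π.symm := rfl

/-- transvection as linear map -/
def tLin (u : Fin n → ZMod 2) : (Fin n → ZMod 2) →ₗ[ZMod 2] (Fin n → ZMod 2) where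
  toFun x := x + (∑ i, x i * u i) • u
  map_add' x y := by
    show (x + y) + _ • u = (x + _ • u) + (y + _ • u)
    have h : ∑ i, (x + y) i * u i = (∑ i, x i * u i) + ∑ i, y i * u i := by
      simp [add_mul, Finset.sum_add_distrib]
    rw [h, add_smul]
    abel
  map_smul' c x := by
    show (c • x) + _ • u = c • (x + _ • u)
    have h : ∑ i, (c • x) i * u i = c * ∑ i, x i * u i := by
      simp [Finset.mul_sum, mul_assoc]
    rw [h, smul_add, smul_smul]

lemma tLin_invol (u : Fin n → ZMod 2) (hu : ∑ i, u i * u i = 0) (x : Fin n → ZMod 2) :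
    tLin u (tLin u x) = x := by
  set s := ∑ i, x i * u i with hs
  have h2 : ∑ i, (x + s • u) i * u i = s := by
    have h : ∀ i, (x + s • u) i * u i = x i * u i + s * (u i * u i) := by
      intro i; simp only [Pi.add_apply, Pi.smul_apply, smul_eq_mul]; ring
    rw [Finset.sum_congr rfl fun i _ => h i, Finset.sum_add_distrib, ← Finset.mul_sum,
      hu, mul_zero, add_zero]
  show tLin u (x + s • u) = x
  show (x + s • u) + (∑ i, (x + s • u) i * u i) • u = x
  rw [h2, add_assoc, ← add_smul, zmod2_add_self, zero_smul, add_zero]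

/-- transvection as linear equivalence -/
def tEquiv (u : Fin n → ZMod 2) (hu : ∑ i, u i * u i = 0) :
    (Fin n → ZMod 2) ≃ₗ[ZMod 2] (Fin n → ZMod 2) :=
  LinearEquiv.ofLinear (tLin u) (tLin u)
    (LinearMap.ext fun x => tLin_invol u hu x)
    (LinearMap.ext fun x => tLin_invol u hu x)

@[simp] lemma tEquiv_apply (u : Fin n → ZMod 2) (hu : ∑ i, u i * u i = 0)
    (x : Fin n → ZMod 2) : tEquiv u hu x = x + (∑ i, x i * u i) • u := rfl

lemma tEquiv_orth (u : Fin n → ZMod 2) (hu : ∑ i, u i * u i = 0)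
    (x y : Fin n → ZMod 2) :
    ∑ i, tEquiv u hu x i * tEquiv u hu y i = ∑ i, x i * y i := by
  set s := ∑ i, x i * u i with hs
  set t := ∑ i, y i * u i with ht
  have key : ∀ i, tEquiv u hu x i * tEquiv u hu y i =
      x i * y i + (t * (x i * u i) + (s * (y i * u i) + (s * t) * (u i * u i))) := by
    intro i
    show (x i + s * u i) * (y i + t * u i) = _
    ring
  rw [Finset.sum_congr rfl fun i _ => key i]
  rw [Finset.sum_add_distrib, Finset.sum_add_distrib, Finset.sum_add_distrib,
    ← Finset.mul_sum, ← Finset.mul_sum, ← Finset.mul_sum, hu, ← hs, ← ht, mul_zero, add_zero]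
  have h3 : t * s + s * t = 0 := by rw [mul_comm]; exact zmod2_add_self (s * t)
  rw [h3, add_zero]

lemma exists_perm_map {α : Type*} [Finite α] {m : ℕ} {f h : Fin m → α}
    (hf : Function.Injective f) (hh : Function.Injective h) :
    ∃ π : Equiv.Perm α, ∀ i, π (f i) = h i := by
  classical
  let e : { x // x ∈ Set.range f } ≃ { x // x ∈ Set.range h } :=
    ((Equiv.ofInjective f hf).symm.trans (Equiv.ofInjective h hh))
  refine ⟨e.extendSubtype, fun i => ?_⟩
  rw [Equiv.extendSubtype_apply_of_mem e (f i) ⟨i, rfl⟩]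
  show ((Equiv.ofInjective h hh) ((Equiv.ofInjective f hf).symm ⟨f i, _⟩) : α) = h i
  rw [show (⟨f i, _⟩ : { x // x ∈ Set.range f }) = Equiv.ofInjective f hf i from
    Subtype.ext rfl]
  rw [Equiv.symm_apply_apply]
  rfl

/-- sum of four basis vectors -/
def fourV (a b c d : Fin n) : Fin n → ZMod 2 :=
  Pi.single a 1 + Pi.single b 1 + Pi.single c 1 + Pi.single d 1

lemma fourV_apply (a b c d i : Fin n) :
    fourV a b c d i = (if i = a then 1 else 0) + (if i = b then 1 else 0) +
      (if i = c then 1 else 0) + (if i = d then 1 else 0) := by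
  simp [fourV, Pi.single_apply]

lemma fourV_sum_self (a b c d : Fin n) :
    ∑ i, fourV a b c d i * fourV a b c d i = 0 := by
  rw [Finset.sum_congr rfl fun i _ => zmod2_mul_self (fourV a b c d i)]
  simp only [fourV, Pi.add_apply, Finset.sum_add_distrib]
  simp [Finset.sum_pi_single']
  decide

lemma fourV_sum (a b c d : Fin n) : ∑ i, fourV a b c d i = 0 := by
  rw [Finset.sum_congr rfl fun i _ => (zmod2_mul_self (fourV a b c d i)).symm]
  exact fourV_sum_self a b c d

lemma fourV_apply_of_ne (a b c d i : Fin n) (ha : i ≠ a) (hb : i ≠ b) (hc : i ≠ c)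
    (hd : i ≠ d) : fourV a b c d i = 0 := by
  rw [fourV_apply]; simp [ha, hb, hc, hd]

lemma fourV_apply_self₁ (a b c d : Fin n) (hb : a ≠ b) (hc : a ≠ c) (hd : a ≠ d) :
    fourV a b c d a = 1 := by
  rw [fourV_apply]; simp [hb, hc, hd]

lemma fourV_apply_self₂ (a b c d : Fin n) (ha : b ≠ a) (hc : b ≠ c) (hd : b ≠ d) :
    fourV a b c d b = 1 := by
  rw [fourV_apply]; simp [ha, hc, hd]

lemma fourV_apply_self₃ (a b c d : Fin n) (ha : c ≠ a) (hb : c ≠ b) (hd : c ≠ d) :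
    fourV a b c d c = 1 := by
  rw [fourV_apply]; simp [ha, hb, hd]

lemma u1234_eq (g : ℕ) : u1234 g = fourV 1 2 3 4 := rfl

/-- the generating set -/
def gens (g : ℕ) : Set ((Fin (g + 1) → ZMod 2) ≃ₗ[ZMod 2] (Fin (g + 1) → ZMod 2)) :=
  PermFix0 g ∪ Transvection1234 g

lemma permL_mem (g : ℕ) (π : Equiv.Perm (Fin (g+1))) (hπ : π 0 = 0) :
    permL π ∈ Subgroup.closure (gens g) :=
  Subgroup.subset_closure (Or.inl ⟨π, hπ, fun _ => rfl⟩)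

lemma conj_tEquiv (π : Equiv.Perm (Fin n)) (w : Fin n → ZMod 2)
    (hw : ∑ i, w i * w i = 0) (hw' : ∑ i, (w ∘ π.symm) i * (w ∘ π.symm) i = 0) :
    (permL π)⁻¹ * tEquiv w hw * permL π = tEquiv (w ∘ π.symm) hw' := by
  apply LinearEquiv.ext
  intro x
  show (tEquiv w hw (x ∘ π)) ∘ π.symm = x + (∑ i, x i * (w ∘ π.symm) i) • (w ∘ π.symm)
  have hs : (∑ i, x (π i) * w i) = ∑ i, x i * w (π.symm i) := by
    rw [← Equiv.sum_comp π (fun j => x j * w (π.symm j))]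
    exact Finset.sum_congr rfl fun i _ => by simp
  funext j
  show (tEquiv w hw (x ∘ π)) (π.symm j) = _
  rw [tEquiv_apply]
  simp only [Pi.add_apply, Pi.smul_apply, smul_eq_mul, Function.comp_apply,
    Equiv.apply_symm_apply]
  rw [hs]

lemma fin_lit_vals (g : ℕ) (hg4 : 4 ≤ g) :
    ((0 : Fin (g+1)) : ℕ) = 0 ∧ ((1 : Fin (g+1)) : ℕ) = 1 ∧ ((2 : Fin (g+1)) : ℕ) = 2 ∧
      ((3 : Fin (g+1)) : ℕ) = 3 ∧ ((4 : Fin (g+1)) : ℕ) = 4 := by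
  refine ⟨rfl, ?_, ?_, ?_, ?_⟩
  · show 1 % (g+1) = 1
    exact Nat.mod_eq_of_lt (by omega)
  · show 2 % (g+1) = 2
    exact Nat.mod_eq_of_lt (by omega)
  · show 3 % (g+1) = 3
    exact Nat.mod_eq_of_lt (by omega)
  · show 4 % (g+1) = 4
    exact Nat.mod_eq_of_lt (by omega)

lemma fourV_mem (g : ℕ) (hg4 : 4 ≤ g) (a b c d : Fin (g+1))
    (h0a : a ≠ 0) (h0b : b ≠ 0) (h0c : c ≠ 0) (h0d : d ≠ 0)
    (hab : a ≠ b) (hac : a ≠ c) (had : a ≠ d) (hbc : b ≠ c) (hbd : b ≠ d) (hcd : c ≠ d) :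
    tEquiv (fourV a b c d) (fourV_sum_self a b c d) ∈ Subgroup.closure (gens g) := by
  obtain ⟨hl0, hl1, hl2, hl3, hl4⟩ := fin_lit_vals g hg4
  have hv : ∀ i : Fin 5, (((![0,1,2,3,4] : Fin 5 → Fin (g+1)) i) : ℕ) = (i : ℕ) := by
    intro i
    fin_cases i
    · exact hl0
    · exact hl1
    · exact hl2
    · exact hl3
    · exact hl4
  have hfinj : Function.Injective (![0,1,2,3,4] : Fin 5 → Fin (g+1)) := by
    intro x y hxy
    have h1 := congrArg Fin.val hxy
    rw [hv x, hv y] at h1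
    exact Fin.ext h1
  have hhinj : Function.Injective (![0,a,b,c,d] : Fin 5 → Fin (g+1)) := by
    intro x y hxy
    fin_cases x <;> fin_cases y <;> simp_all
  obtain ⟨π, hπ⟩ := exists_perm_map hfinj hhinj
  have hπ0 : π 0 = 0 := by simpa using hπ 0
  have hπ1 : π 1 = a := by simpa using hπ 1
  have hπ2 : π 2 = b := by simpa using hπ 2
  have hπ3 : π 3 = c := by simpa using hπ 3
  have hπ4 : π 4 = d := by simpa using hπ 4
  have h14 : ∑ i, u1234 g i * u1234 g i = 0 := by
    rw [u1234_eq]; exact fourV_sum_self 1 2 3 4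
  have hueq : fourV a b c d = (u1234 g) ∘ π.symm := by
    funext j
    show fourV a b c d j = fourV 1 2 3 4 (π.symm j)
    rw [fourV_apply, fourV_apply]
    simp only [Equiv.symm_apply_eq, hπ1, hπ2, hπ3, hπ4]
  have hcongr : ∀ (u u' : Fin (g+1) → ZMod 2) (h : ∑ i, u i * u i = 0)
      (h' : ∑ i, u' i * u' i = 0), u = u' → tEquiv u h = tEquiv u' h' := by
    rintro u u' h h' rfl; rfl
  have hw' : ∑ i, ((u1234 g) ∘ π.symm) i * ((u1234 g) ∘ π.symm) i = 0 := by
    rw [← hueq]; exact fourV_sum_self a b c d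
  have key : tEquiv (fourV a b c d) (fourV_sum_self a b c d)
      = (permL π)⁻¹ * tEquiv (u1234 g) h14 * permL π := by
    rw [conj_tEquiv π (u1234 g) h14 hw']
    exact hcongr _ _ _ _ hueq
  have hT0 : tEquiv (u1234 g) h14 ∈ Subgroup.closure (gens g) :=
    Subgroup.subset_closure (Or.inr ⟨hg4, fun _ => rfl⟩)
  rw [key]
  exact mul_mem (mul_mem (inv_mem (permL_mem g π hπ0)) hT0) (permL_mem g π hπ0)

lemma gens_sub_stab (g : ℕ) : ∀ F ∈ gens g,
    F ∈ OrthGroup (g+1) ∧ F (Pi.single 0 1) = Pi.single 0 1 := by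
  rintro F (⟨π, hπ0, hπ⟩ | ⟨hg4, hT⟩)
  · constructor
    · intro x y
      rw [hπ x, hπ y]
      exact Equiv.sum_comp π (fun i => x i * y i)
    · rw [hπ, comp_single]
      have hs0 : π.symm 0 = 0 := by rw [Equiv.symm_apply_eq, hπ0]
      rw [hs0]
  · have h14 : ∑ i, u1234 g i * u1234 g i = 0 := by
      rw [u1234_eq]; exact fourV_sum_self 1 2 3 4
    have hFt : ∀ x, F x = tEquiv (u1234 g) h14 x := fun x => by
      rw [hT x, tEquiv_apply]
    constructor
    · intro x y
      rw [hFt x, hFt y]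
      exact tEquiv_orth _ h14 x y
    · rw [hT]
      rw [sum_single_mul 0 (u1234 g)]
      have hz : u1234 g 0 = 0 := by
        obtain ⟨hl0, hl1, hl2, hl3, hl4⟩ := fin_lit_vals g hg4
        rw [u1234_eq, fourV_apply]
        have h1 : (0 : Fin (g+1)) ≠ 1 := fun h => by
          have := congrArg Fin.val h; rw [hl0, hl1] at this; omega
        have h2 : (0 : Fin (g+1)) ≠ 2 := fun h => by
          have := congrArg Fin.val h; rw [hl0, hl2] at this; omega
        have h3 : (0 : Fin (g+1)) ≠ 3 := fun h => by
          have := congrArg Fin.val h; rw [hl0, hl3] at this; omega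
        have h4 : (0 : Fin (g+1)) ≠ 4 := fun h => by
          have := congrArg Fin.val h; rw [hl0, hl4] at this; omega
        simp [h1, h2, h3, h4]
      rw [hz, zero_smul, add_zero]

lemma closure_sub_stab (g : ℕ) : ∀ F ∈ Subgroup.closure (gens g),
    F ∈ OrthGroup (g+1) ∧ F (Pi.single 0 1) = Pi.single 0 1 := by
  intro F hF
  refine Subgroup.closure_induction (fun x hx => gens_sub_stab g x hx)
    ⟨one_mem _, rfl⟩ ?_ ?_ hF
  · intro x y _ _ hx' hy'
    refine ⟨mul_mem hx'.1 hy'.1, ?_⟩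
    show x (y (Pi.single 0 1)) = _
    rw [hy'.2, hx'.2]
  · intro x _ hx'
    refine ⟨inv_mem hx'.1, ?_⟩
    show x.symm (Pi.single 0 1) = Pi.single 0 1
    apply x.injective
    rw [LinearEquiv.apply_symm_apply, hx'.2]

/-- the key transitivity lemma: a suitable product of generators moves any
admissible vector to the `(k+1)`-st basis vector. -/
lemma reduce (g k : ℕ) (hk : k < g) (N : ℕ) :
    ∀ v : Fin (g+1) → ZMod 2, wt v ≤ N →
    (∀ i : Fin (g+1), (i : ℕ) ≤ k → v i = 0) → (∑ i, v i = 1) →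
    (∃ h0 : Fin (g+1), k < (h0 : ℕ) ∧ v h0 = 0) →
    ∃ P ∈ Subgroup.closure (gens g),
      (∀ i : Fin (g+1), (i : ℕ) ≤ k → P (Pi.single i 1) = Pi.single i 1) ∧
      P v = Pi.single (⟨k+1, by omega⟩ : Fin (g+1)) 1 := by
  induction N with
  | zero =>
    intro v hN _ h1 _
    exfalso
    have := wt_odd v h1
    omega
  | succ N ih =>
    intro v hN hzero hsum hhole
    have hodd := wt_odd v hsum
    by_cases hw1 : wt v = 1
    · -- weight one
      obtain ⟨m, hm⟩ := Finset.card_eq_one.mp hw1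
      have hvm : v m = 1 := by
        have h1 : m ∈ Finset.univ.filter (fun i => v i = 1) :=
          hm ▸ Finset.mem_singleton_self m
        exact (Finset.mem_filter.mp h1).2
      have hveq : v = Pi.single m 1 := by
        funext i
        rcases eq_or_ne i m with rfl | hne
        · rw [hvm, Pi.single_eq_same]
        · have h1 : i ∉ Finset.univ.filter (fun t => v t = 1) := by
            rw [hm]; simpa using hne
          have hvi : v i ≠ 1 := fun h =>
            h1 (Finset.mem_filter.mpr ⟨Finset.mem_univ i, h⟩)
          rcases zmod2_cases (v i) with h | h
          · rw [h, Pi.single_apply, if_neg hne]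
          · exact absurd h hvi
      have hmk : k < (m : ℕ) := by
        by_contra hle
        push_neg at hle
        rw [hzero m hle] at hvm
        exact absurd hvm (by decide)
      have hm0 : m ≠ 0 := fun h => by
        rw [h] at hmk; simp at hmk
      set j : Fin (g+1) := ⟨k+1, by omega⟩ with hj
      have hj0 : j ≠ 0 := fun h => by
        have := congrArg Fin.val h
        simp [hj] at this
      refine ⟨permL (Equiv.swap m j), permL_mem g _ ?_, ?_, ?_⟩
      · exact Equiv.swap_apply_of_ne_of_ne (Ne.symm hm0) (Ne.symm hj0)
      · intro i hi
        have h1 : i ≠ m := fun h => by rw [h] at hi; omega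
        have h2 : i ≠ j := fun h => by
          rw [h] at hi
          have hjv : (j : ℕ) = k + 1 := rfl
          omega
        rw [permL_apply, comp_single, Equiv.symm_swap, Equiv.swap_apply_of_ne_of_ne h1 h2]
      · rw [hveq, permL_apply, comp_single, Equiv.symm_swap, Equiv.swap_apply_left]
    · -- weight at least three
      have hw3 : 3 ≤ wt v := by omega
      obtain ⟨a, b, c, ha, hb, hc, hab, hac, hbc⟩ :=
        Finset.two_lt_card_iff.mp (show 2 < (Finset.univ.filter (fun i => v i = 1)).card by
          unfold wt at hw3; omega)
      obtain ⟨h0, hh0k, hh0v⟩ := hhole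
      have hva : v a = 1 := (Finset.mem_filter.mp ha).2
      have hvb : v b = 1 := (Finset.mem_filter.mp hb).2
      have hvc : v c = 1 := (Finset.mem_filter.mp hc).2
      have hlt : ∀ t : Fin (g+1), v t = 1 → k < (t : ℕ) := by
        intro t hvt
        by_contra hle
        push_neg at hle
        rw [hzero t hle] at hvt
        exact absurd hvt (by decide)
      have hka := hlt a hva
      have hkb := hlt b hvb
      have hkc := hlt c hvc
      have hah : a ≠ h0 := fun h => by rw [h, hh0v] at hva; exact absurd hva (by decide)
      have hbh : b ≠ h0 := fun h => by rw [h, hh0v] at hvb; exact absurd hvb (by decide)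
      have hch : c ≠ h0 := fun h => by rw [h, hh0v] at hvc; exact absurd hvc (by decide)
      have hzval : ((0 : Fin (g+1)) : ℕ) = 0 := rfl
      have hne0 : ∀ t : Fin (g+1), k < (t : ℕ) → t ≠ 0 := by
        intro t ht h
        rw [h] at ht
        omega
      have ha0 := hne0 a hka
      have hb0 := hne0 b hkb
      have hc0 := hne0 c hkc
      have hh00 := hne0 h0 hh0k
      -- four distinct nonzero indices force 4 ≤ g
      have hsubset : ({a, b, c, h0} : Finset (Fin (g+1))) ⊆ Finset.univ.erase 0 := by
        intro t ht
        simp only [Finset.mem_insert, Finset.mem_singleton] at ht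
        refine Finset.mem_erase.mpr ⟨?_, Finset.mem_univ t⟩
        rcases ht with rfl | rfl | rfl | rfl <;> assumption
      have hc4 : ({a, b, c, h0} : Finset (Fin (g+1))).card = 4 := by
        rw [Finset.card_insert_of_notMem (by simp [hab, hac, hah]),
          Finset.card_insert_of_notMem (by simp [hbc, hbh]),
          Finset.card_insert_of_notMem (by simp [hch]), Finset.card_singleton]
      have hg4 : 4 ≤ g := by
        have h1 := Finset.card_le_card hsubset
        rw [hc4, Finset.card_erase_of_mem (Finset.mem_univ 0), Finset.card_univ,
          Fintype.card_fin] at h1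
        omega
      set u := fourV a b c h0 with hu
      have huu := fourV_sum_self a b c h0
      have hTmem : tEquiv u huu ∈ Subgroup.closure (gens g) :=
        fourV_mem g hg4 a b c h0 ha0 hb0 hc0 hh00 hab hac hah hbc hbh hch
      have hsum_vu : ∑ i, v i * u i = 1 := by
        have h1 : ∀ i, v i * u i = v i * ((if i = a then 1 else 0) + (if i = b then 1 else 0)
            + (if i = c then 1 else 0) + (if i = h0 then 1 else 0)) := fun i => by
          rw [hu, fourV_apply]
        rw [Finset.sum_congr rfl fun i _ => h1 i]
        simp only [mul_add, Finset.sum_add_distrib, mul_ite, mul_one, mul_zero,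
          Finset.sum_ite_eq', Finset.mem_univ, if_true]
        rw [hva, hvb, hvc, hh0v]
        decide
      have hTv : tEquiv u huu v = v + u := by
        rw [tEquiv_apply, hsum_vu, one_smul]
      have hv'zero : ∀ i : Fin (g+1), (i : ℕ) ≤ k → (v + u) i = 0 := by
        intro i hi
        have hne : ∀ t : Fin (g+1), k < (t : ℕ) → i ≠ t := fun t ht h => by
          rw [h] at hi; omega
        rw [Pi.add_apply, hzero i hi, hu,
          fourV_apply_of_ne a b c h0 i (hne a hka) (hne b hkb) (hne c hkc) (hne h0 hh0k),
          add_zero]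
      have hv'sum : ∑ i, (v + u) i = 1 := by
        simp only [Pi.add_apply, Finset.sum_add_distrib, hsum]
        rw [hu, fourV_sum, add_zero]
      have hv'a : (v + u) a = 0 := by
        rw [Pi.add_apply, hva, hu, fourV_apply_self₁ a b c h0 hab hac hah]
        decide
      have hv'b : (v + u) b = 0 := by
        rw [Pi.add_apply, hvb, hu, fourV_apply_self₂ a b c h0 (Ne.symm hab) hbc hbh]
        decide
      have hv'c : (v + u) c = 0 := by
        rw [Pi.add_apply, hvc, hu, fourV_apply_self₃ a b c h0 (Ne.symm hac) (Ne.symm hbc) hch]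
        decide
      have hwt' : wt (v + u) ≤ N := by
        have hsub : (Finset.univ.filter (fun i => (v + u) i = 1)) ⊆
            insert h0 ((Finset.univ.filter (fun i => v i = 1)) \ {a, b, c}) := by
          intro i hi
          have hv'i : (v + u) i = 1 := (Finset.mem_filter.mp hi).2
          rcases eq_or_ne i h0 with rfl | hih
          · exact Finset.mem_insert_self _ _
          · apply Finset.mem_insert_of_mem
            have hia : i ≠ a := fun h => by rw [h, hv'a] at hv'i; exact absurd hv'i (by decide)
            have hib : i ≠ b := fun h => by rw [h, hv'b] at hv'i; exact absurd hv'i (by decide)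
            have hic : i ≠ c := fun h => by rw [h, hv'c] at hv'i; exact absurd hv'i (by decide)
            have hui : u i = 0 := by
              rw [hu]; exact fourV_apply_of_ne a b c h0 i hia hib hic hih
            have hvi : v i = 1 := by
              rw [Pi.add_apply, hui, add_zero] at hv'i; exact hv'i
            exact Finset.mem_sdiff.mpr ⟨Finset.mem_filter.mpr ⟨Finset.mem_univ _, hvi⟩,
              by simp [hia, hib, hic]⟩
        have h3sub : ({a, b, c} : Finset (Fin (g+1))) ⊆
            Finset.univ.filter (fun i => v i = 1) := by
          intro t ht
          simp only [Finset.mem_insert, Finset.mem_singleton] at ht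
          rcases ht with rfl | rfl | rfl
          exacts [ha, hb, hc]
        have hc3 : ({a, b, c} : Finset (Fin (g+1))).card = 3 := by
          rw [Finset.card_insert_of_notMem (by simp [hab, hac]),
            Finset.card_insert_of_notMem (by simp [hbc]), Finset.card_singleton]
        have h1 := Finset.card_le_card hsub
        have h2 := Finset.card_insert_le h0
          ((Finset.univ.filter (fun i => v i = 1)) \ {a, b, c})
        have h5 := Finset.card_sdiff_of_subset h3sub
        unfold wt at hN hw3 ⊢
        omega
      obtain ⟨P', hP'mem, hP'fix, hP'v⟩ := ih (v + u) hwt' hv'zero hv'sum ⟨a, hka, hv'a⟩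
      refine ⟨P' * tEquiv u huu, mul_mem hP'mem hTmem, ?_, ?_⟩
      · intro i hi
        have hTfix : tEquiv u huu (Pi.single i 1) = Pi.single i 1 := by
          rw [tEquiv_apply, sum_single_mul i u]
          have hne : ∀ t : Fin (g+1), k < (t : ℕ) → i ≠ t := fun t ht h => by
            rw [h] at hi; omega
          have hui : u i = 0 := by
            rw [hu]
            exact fourV_apply_of_ne a b c h0 i (hne a hka) (hne b hkb) (hne c hkc)
              (hne h0 hh0k)
          rw [hui, zero_smul, add_zero]
        show P' (tEquiv u huu (Pi.single i 1)) = _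
        rw [hTfix]
        exact hP'fix i hi
      · show P' (tEquiv u huu v) = _
        rw [hTv]
        exact hP'v

lemma main_ind (g : ℕ) :
    ∀ (n k : ℕ), g ≤ k + n →
    ∀ F : (Fin (g+1) → ZMod 2) ≃ₗ[ZMod 2] (Fin (g+1) → ZMod 2),
      F ∈ OrthGroup (g+1) →
      (∀ i : Fin (g+1), (i : ℕ) ≤ k → F (Pi.single i 1) = Pi.single i 1) →
      F ∈ Subgroup.closure (gens g) := by
  intro n
  induction n with
  | zero =>
    intro k hk F _ hfix
    have hFone : F = 1 := by
      apply LinearEquiv.ext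
      intro x
      have hik : ∀ i : Fin (g+1), (i : ℕ) ≤ k := fun i => by
        have := i.isLt; omega
      have hrep := eq_sum_single x
      show F x = x
      conv_lhs => rw [hrep]
      rw [map_sum]
      simp only [map_smul]
      rw [Finset.sum_congr rfl fun i _ => by rw [hfix i (hik i)]]
      exact hrep.symm
    rw [hFone]
    exact one_mem _
  | succ n ihn =>
    intro k hk F hF hfix
    by_cases hkn : g ≤ k + n
    · exact ihn k hkn F hF hfix
    push_neg at hkn
    have hkg : k < g := by omega
    set j : Fin (g+1) := ⟨k+1, by omega⟩ with hj
    set v := F (Pi.single j 1) with hv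
    have hvzero : ∀ i : Fin (g+1), (i : ℕ) ≤ k → v i = 0 := by
      intro i hi
      have h1 := hF (Pi.single j 1) (Pi.single i 1)
      rw [hfix i hi, ← hv, sum_mul_single i v, sum_single_mul j (Pi.single i 1)] at h1
      rw [h1, Pi.single_apply, if_neg (fun h : j = i => by
        have := congrArg Fin.val h; simp [hj] at this; omega)]
    have hvsum : ∑ t, v t = 1 := by
      have h1 := hF (Pi.single j 1) (Pi.single j 1)
      rw [← hv, sum_single_mul j (Pi.single j 1), Pi.single_eq_same] at h1
      rw [← h1]
      exact (Finset.sum_congr rfl fun t _ => (zmod2_mul_self (v t)).symm)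
    by_cases hg1 : k + 1 < g
    · -- a second fresh index exists, giving a hole
      set j2 : Fin (g+1) := ⟨k+2, by omega⟩ with hj2
      set w := F (Pi.single j2 1) with hw
      have hwzero : ∀ i : Fin (g+1), (i : ℕ) ≤ k → w i = 0 := by
        intro i hi
        have h1 := hF (Pi.single j2 1) (Pi.single i 1)
        rw [hfix i hi, ← hw, sum_mul_single i w, sum_single_mul j2 (Pi.single i 1)] at h1
        rw [h1, Pi.single_apply, if_neg (fun h : j2 = i => by
          have := congrArg Fin.val h; simp [hj2] at this; omega)]
      have hwsum : ∑ t, w t = 1 := by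
        have h1 := hF (Pi.single j2 1) (Pi.single j2 1)
        rw [← hw, sum_single_mul j2 (Pi.single j2 1), Pi.single_eq_same] at h1
        rw [← h1]
        exact (Finset.sum_congr rfl fun t _ => (zmod2_mul_self (w t)).symm)
      have hvw : ∑ t, v t * w t = 0 := by
        have h1 := hF (Pi.single j 1) (Pi.single j2 1)
        rw [← hv, ← hw, sum_single_mul j (Pi.single j2 1)] at h1
        rw [h1, Pi.single_apply, if_neg (fun h : j = j2 => by
          have := congrArg Fin.val h; simp [hj, hj2] at this)]
      have hhole : ∃ h0 : Fin (g+1), k < (h0 : ℕ) ∧ v h0 = 0 := by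
        by_contra hcon
        push_neg at hcon
        have hall : ∀ t : Fin (g+1), k < (t : ℕ) → v t = 1 := fun t ht =>
          (zmod2_cases (v t)).resolve_left (hcon t ht)
        have h2 : ∑ t, v t * w t = ∑ t, w t := Finset.sum_congr rfl (fun t _ => by
          rcases le_or_gt ((t : Fin (g+1)) : ℕ) k with h | h
          · rw [hwzero t h, mul_zero]
          · rw [hall t h, one_mul])
        rw [h2, hwsum] at hvw
        exact absurd hvw (by decide)
      obtain ⟨P, hPmem, hPfix, hPv⟩ := reduce g k hkg (wt v) v le_rfl hvzero hvsum hhole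
      have hPF : ∀ i : Fin (g+1), (i : ℕ) ≤ k + 1 →
          (P * F) (Pi.single i 1) = Pi.single i 1 := by
        intro i hi
        rcases le_or_gt ((i : Fin (g+1)) : ℕ) k with h | h
        · show P (F (Pi.single i 1)) = _
          rw [hfix i h]
          exact hPfix i h
        · have hij : i = j := Fin.ext (by simp [hj]; omega)
          show P (F (Pi.single i 1)) = _
          rw [hij, ← hv, hPv]
      have hPO : P ∈ OrthGroup (g+1) := (closure_sub_stab g P hPmem).1
      have hPFmem := ihn (k+1) (by omega) (P * F) (mul_mem hPO hF) hPF
      have hFeq : F = P⁻¹ * (P * F) := by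
        rw [← mul_assoc, inv_mul_cancel, one_mul]
      rw [hFeq]
      exact mul_mem (inv_mem hPmem) hPFmem
    · -- here g = k + 1 : the new basis vector is already fixed
      have hgk : g = k + 1 := by omega
      have hvj : v j = 1 := by
        have h1 : ∑ t, v t = v j := by
          rw [Finset.sum_eq_single j]
          · intro t _ htj
            apply hvzero t
            have h2 := t.isLt
            have h3 : (t : ℕ) ≠ k + 1 := fun h => htj (Fin.ext (by simp [hj, h]))
            omega
          · intro h
            exact absurd (Finset.mem_univ j) h
        rw [← h1, hvsum]
      have hveq : v = Pi.single j 1 := by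
        funext i
        rcases eq_or_ne i j with rfl | hne
        · rw [hvj, Pi.single_eq_same]
        · rw [Pi.single_apply, if_neg hne]
          apply hvzero i
          have h2 := i.isLt
          have h3 : (i : ℕ) ≠ k + 1 := fun h => hne (Fin.ext (by simp [hj, h]))
          omega
      apply ihn (k+1) (by omega) F hF
      intro i hi
      rcases le_or_gt ((i : Fin (g+1)) : ℕ) k with h | h
      · exact hfix i h
      · have hij : i = j := Fin.ext (by simp [hj]; omega)
        rw [hij, ← hv, hveq]

end StabAux

/-- For `g ≥ 1`, the isotropy subgroup `Iso_{α₁} = {F ∈ O(V) | F e₀ = e₀}` of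
`V = Fin (g+1) → ZMod 2` is generated by the coordinate permutations fixing the index `0`
together with (when `g ≥ 4`) the transvection `T_{e₁+e₂+e₃+e₄}`: every element of
`Iso_{α₁}` is a product of these elements. -/
theorem stab_alpha1_generated (g : ℕ) (hg : 1 ≤ g) :
    {F : (Fin (g + 1) → ZMod 2) ≃ₗ[ZMod 2] (Fin (g + 1) → ZMod 2) |
        F ∈ OrthGroup (g + 1) ∧ F (Pi.single 0 1) = Pi.single 0 1} =
      ↑(Subgroup.closure (PermFix0 g ∪ Transvection1234 g)) := by
  ext F
  simp only [Set.mem_setOf_eq, SetLike.mem_coe]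
  constructor
  · rintro ⟨hF, hfix⟩
    apply StabAux.main_ind g g 0 (by omega) F hF
    intro i hi
    have h0 : i = 0 := Fin.ext (by simpa using hi)
    rw [h0]
    exact hfix
  · intro hmem
    exact StabAux.closure_sub_stab g F hmem
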